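/- arXiv:1505.07262 — 2 statements merged into one kernel-verified Lean document; each statement's English description precedes it below -/
import Mathlib

section
/- Let α>0, let μ be a nonnegative Borel measure on ℂ, let q>0 and 0<p≤∞, and set D_{rqμ}(z) = (1+|z|)^q μ(D(z,r)). If D_{δqμ} belongs to L^p(ℂ, dm) for some δ>0, then D_{rqμ} belongs to L^p(ℂ, dm) for every r>0. -/
/-!
Cover the closed disc of radius `r` about the origin by finitely many discs `D(w, δ)`. Translating
the cover gives `μ(D(z, r)) ≤ ∑_w μ(D(z + w, δ))`, and Peetre's inequality
`(1 + |z|)^q ≤ (1 + |w|)^|q| (1 + |z + w|)^q` turns this into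
`D_{rqμ} ≤ (1 + r)^|q| ∑_w D_{δqμ}(· + w)`, a finite sum of translates of an `L^p` function.
-/

open MeasureTheory Filter Topology
open scoped ENNReal Classical

noncomputable section

/-- Membership in `L^p(ℂ, dm)` for an `ℝ≥0∞`-valued function, `0 < p ≤ ∞`:
for finite `p` the `p`-th power has finite integral, and for `p = ∞` the function is
(essentially) bounded. -/
def MemLpENN (p : ℝ≥0∞) (F : ℂ → ℝ≥0∞) : Prop :=
  if p = ⊤ then essSup F volume < ⊤ else (∫⁻ z : ℂ, F z ^ p.toReal) < ⊤

open Metric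

section MeasureOfBall

variable {X : Type*} [PseudoMetricSpace X] [MeasurableSpace X]

theorem lowerSemicontinuous_measure_ball (μ : Measure X) (r : ℝ) :
    LowerSemicontinuous fun x => μ (ball x r) := by
  intro x y hy
  have hunion : ball x r = ⋃ n : ℕ, ball x (r - 1 / (n + 1)) := by
    ext ζ
    simp only [mem_ball, Set.mem_iUnion]
    refine ⟨fun h => ?_, fun ⟨n, hn⟩ => hn.trans (by simp only [sub_lt_self_iff]; positivity)⟩
    obtain ⟨n, hn⟩ := exists_nat_one_div_lt (sub_pos.2 h)
    exact ⟨n, by linarith⟩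
  have hmono : Monotone fun n : ℕ => ball x (r - 1 / (n + 1)) :=
    fun m n hmn => ball_subset_ball (by gcongr)
  change y < μ (ball x r) at hy
  rw [hunion, hmono.measure_iUnion, lt_iSup_iff] at hy
  obtain ⟨n, hn⟩ := hy
  filter_upwards [ball_mem_nhds x (show (0 : ℝ) < 1 / (n + 1) by positivity)] with x' hx'
  refine hn.trans_le (measure_mono (ball_subset_ball' ?_))
  rw [mem_ball, dist_comm] at hx'
  linarith

theorem measurable_measure_ball [OpensMeasurableSpace X] (μ : Measure X) (r : ℝ) :
    Measurable fun x => μ (ball x r) :=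
  (lowerSemicontinuous_measure_ball μ r).measurable

end MeasureOfBall

section Peetre

variable {E : Type*} [SeminormedAddCommGroup E]

theorem one_add_norm_le_mul_one_add_norm (x y : E) :
    1 + ‖x‖ ≤ (1 + ‖y‖) * (1 + ‖x + y‖) := by
  have : ‖x‖ ≤ ‖y‖ + ‖x + y‖ := by
    simpa [norm_neg, add_comm] using norm_add_le (-y) (x + y)
  nlinarith [norm_nonneg y, norm_nonneg (x + y)]

theorem one_add_norm_rpow_le (q : ℝ) (x y : E) :
    (1 + ‖x‖) ^ q ≤ (1 + ‖y‖) ^ |q| * (1 + ‖x + y‖) ^ q := by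
  rcases le_or_gt 0 q with hq | hq
  · rw [abs_of_nonneg hq, ← Real.mul_rpow (by positivity) (by positivity)]
    exact Real.rpow_le_rpow (by positivity) (one_add_norm_le_mul_one_add_norm x y) hq
  · have hxy := one_add_norm_le_mul_one_add_norm (x + y) (-y)
    rw [norm_neg, add_neg_cancel_right] at hxy
    have hpow := Real.rpow_le_rpow (by positivity) hxy (neg_nonneg.2 hq.le)
    rw [Real.mul_rpow (by positivity) (by positivity)] at hpow
    have hneg : ∀ a : ℝ, 0 < a → a ^ q = (a ^ (-q))⁻¹ := fun a ha => by
      rw [← Real.rpow_neg ha.le, neg_neg]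
    rw [abs_of_neg hq, hneg _ (by positivity), hneg (1 + ‖x + y‖) (by positivity),
      ← div_eq_mul_inv, le_div_iff₀ (by positivity), inv_mul_le_iff₀ (by positivity)]
    linarith

end Peetre

theorem exists_finset_norm_le_ball_subset_iUnion_ball {E : Type*} [SeminormedAddCommGroup E]
    [ProperSpace E] {δ : ℝ} (hδ : 0 < δ) (r : ℝ) :
    ∃ t : Finset E, (∀ w ∈ t, ‖w‖ ≤ r) ∧ ∀ z, ball z r ⊆ ⋃ w ∈ t, ball (z + w) δ := by
  obtain ⟨t, htr, hcover⟩ := (isCompact_closedBall (0 : E) r).elim_nhds_subcover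
    (fun w => ball w δ) (fun w _ => ball_mem_nhds w hδ)
  refine ⟨t, fun w hw => mem_closedBall_zero_iff.1 (htr w hw), fun z ζ hζ => ?_⟩
  have hζz : ζ - z ∈ closedBall (0 : E) r := by
    rw [mem_closedBall_zero_iff, ← dist_eq_norm]
    exact (mem_ball.1 hζ).le
  obtain ⟨w, hw, hζw⟩ := Set.mem_iUnion₂.1 (hcover hζz)
  refine Set.mem_iUnion₂.2 ⟨w, hw, ?_⟩
  rw [mem_ball, dist_eq_norm] at hζw ⊢
  rwa [← sub_sub]

section WeightedBallMeasure

variable {E : Type*} [NormedAddCommGroup E] [MeasurableSpace E]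

/-- The paper's `D_{rqμ}`. -/
def weightedBallMeasure (μ : Measure E) (q r : ℝ) (z : E) : ℝ≥0∞ :=
  ENNReal.ofReal ((1 + ‖z‖) ^ q) * μ (ball z r)

theorem measurable_weightedBallMeasure [OpensMeasurableSpace E] (μ : Measure E) (q r : ℝ) :
    Measurable (weightedBallMeasure μ q r) :=
  (by fun_prop : Measurable fun z : E => ENNReal.ofReal ((1 + ‖z‖) ^ q)).mul
    (measurable_measure_ball μ r)

theorem weightedBallMeasure_le_mul_sum (μ : Measure E) (q : ℝ) {r δ R : ℝ} {t : Finset E}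
    (ht : ∀ w ∈ t, ‖w‖ ≤ R) {z : E} (hcover : ball z r ⊆ ⋃ w ∈ t, ball (z + w) δ) :
    weightedBallMeasure μ q r z ≤
      ENNReal.ofReal ((1 + R) ^ |q|) * ∑ w ∈ t, weightedBallMeasure μ q δ (z + w) := by
  have hweight : ∀ w ∈ t,
      (1 + ‖z‖) ^ q ≤ (1 + R) ^ |q| * (1 + ‖z + w‖) ^ q := fun w hw => by
    refine (one_add_norm_rpow_le q z w).trans ?_
    gcongr
    exact ht w hw
  calc weightedBallMeasure μ q r z
      ≤ ENNReal.ofReal ((1 + ‖z‖) ^ q) * ∑ w ∈ t, μ (ball (z + w) δ) :=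
        mul_le_mul_right ((measure_mono hcover).trans (measure_biUnion_finset_le t _)) _
    _ = ∑ w ∈ t, ENNReal.ofReal ((1 + ‖z‖) ^ q) * μ (ball (z + w) δ) := Finset.mul_sum _ _ _
    _ ≤ ∑ w ∈ t, ENNReal.ofReal ((1 + R) ^ |q|) * weightedBallMeasure μ q δ (z + w) := by
        refine Finset.sum_le_sum fun w hw => ?_
        rw [weightedBallMeasure, ← mul_assoc, ← ENNReal.ofReal_mul' (by positivity)]
        gcongr
        exact hweight w hw
    _ = _ := (Finset.mul_sum _ _ _).symm

theorem memLp_weightedBallMeasure_of_memLp [ProperSpace E] [BorelSpace E] {ν : Measure E}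
    [ν.IsAddRightInvariant] {μ : Measure E} {q δ : ℝ} {p : ℝ≥0∞}
    (h : MemLp (weightedBallMeasure μ q δ) p ν) (hδ : 0 < δ) (r : ℝ) :
    MemLp (weightedBallMeasure μ q r) p ν := by
  obtain ⟨t, ht, hcover⟩ := exists_finset_norm_le_ball_subset_iUnion_ball (E := E) hδ r
  have hsum : MemLp (fun z => ∑ w ∈ t, weightedBallMeasure μ q δ (z + w)) p ν :=
    memLp_finsetSum t fun w _ => h.comp_measurePreserving (measurePreserving_add_right ν w)
  refine hsum.of_le_mul' (c := Real.toNNReal ((1 + r) ^ |q|))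
    (measurable_weightedBallMeasure μ q r).aestronglyMeasurable (Eventually.of_forall fun z => ?_)
  simp only [enorm_eq_self]
  exact weightedBallMeasure_le_mul_sum μ q ht (hcover z)

end WeightedBallMeasure

theorem memLpENN_iff_memLp {p : ℝ≥0∞} (hp : p ≠ 0) {F : ℂ → ℝ≥0∞}
    (hF : AEStronglyMeasurable F volume) : MemLpENN p F ↔ MemLp F p volume := by
  simp only [MemLpENN, MemLp, hF, true_and]
  split_ifs with htop
  · simp [htop, eLpNorm_exponent_top, eLpNormEssSup]
  · simp [eLpNorm_lt_top_iff_lintegral_rpow_enorm_lt_top hp htop]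

theorem statement16_general (μ : Measure ℂ) (q : ℝ)
    (p : ℝ≥0∞) (hp : 0 < p) (δ : ℝ) (hδ : 0 < δ)
    (h : MemLpENN p fun z : ℂ => ENNReal.ofReal ((1 + ‖z‖) ^ q) * μ (Metric.ball z δ)) :
    ∀ r > 0, MemLpENN p fun z : ℂ => ENNReal.ofReal ((1 + ‖z‖) ^ q) * μ (Metric.ball z r) := by
  intro r _
  have hmemLp : ∀ s, MemLpENN p (weightedBallMeasure μ q s) ↔
      MemLp (weightedBallMeasure μ q s) p volume := fun s =>
    memLpENN_iff_memLp hp.ne' (measurable_weightedBallMeasure μ q s).aestronglyMeasurable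
  exact (hmemLp r).2 (memLp_weightedBallMeasure_of_memLp ((hmemLp δ).1 h) hδ r)

theorem statement16 (α : ℝ) (hα : 0 < α) (μ : Measure ℂ) (q : ℝ) (hq : 0 < q)
    (p : ℝ≥0∞) (hp : 0 < p) (δ : ℝ) (hδ : 0 < δ)
    (h : MemLpENN p fun z : ℂ => ENNReal.ofReal ((1 + ‖z‖) ^ q) * μ (Metric.ball z δ)) :
    ∀ r > 0, MemLpENN p fun z : ℂ => ENNReal.ofReal ((1 + ‖z‖) ^ q) * μ (Metric.ball z r) :=
  statement16_general μ q p hp δ hδ h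
end
end

section
/- Let ψ be an entire function on ℂ satisfying limsup_{|z|→∞} (|ψ(z)| − |z|) ≤ 0. Then there exist complex numbers a and b with |a| ≤ 1 such that ψ(z) = a z + b for all z ∈ ℂ, and if |a| = 1 then b = 0. -/
/-!
Linear growth makes the difference quotient `(ψ z - ψ 0) / z` a bounded entire function, so by
Liouville it is a constant `a` and `ψ z = a z + b`. Choosing `z` of modulus `r` with `a z` pointing
in the direction of `b` gives `‖a z + b‖ = ‖a‖ r + ‖b‖`, and the growth bound `‖a‖ r + ‖b‖ ≤ r + ε`
for all large `r` forces `‖a‖ ≤ 1`, and `‖b‖ ≤ ε` for every `ε` when `‖a‖ = 1`.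
-/

open Bornology Metric Set Complex Filter

lemma isBounded_range_of_norm_le_of_lt_norm {E F : Type*} [NormedAddCommGroup E] [ProperSpace E]
    [SeminormedAddCommGroup F] {f : E → F} (hf : Continuous f) {R C : ℝ}
    (h : ∀ z, R < ‖z‖ → ‖f z‖ ≤ C) : IsBounded (range f) := by
  have hcover : range f ⊆ f '' closedBall 0 R ∪ closedBall 0 C := by
    rintro _ ⟨z, rfl⟩
    rcases le_or_gt ‖z‖ R with hz | hz
    · exact .inl (mem_image_of_mem f (mem_closedBall_zero_iff.2 hz))
    · exact .inr (mem_closedBall_zero_iff.2 (h z hz))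
  exact (((isCompact_closedBall 0 R).image hf).isBounded.union isBounded_closedBall).subset hcover

lemma norm_dslope_zero_le_of_norm_le {F : Type*} [NormedAddCommGroup F] [NormedSpace ℂ F]
    {f : ℂ → F} {A B : ℝ} {z : ℂ} (hz : 1 ≤ ‖z‖) (hfz : ‖f z‖ ≤ A * ‖z‖ + B) :
    ‖dslope f 0 z‖ ≤ A + |B| + ‖f 0‖ := by
  have hnorm : ‖z‖ * ‖dslope f 0 z‖ = ‖f z - f 0‖ := by
    rw [← norm_smul, ← sub_smul_dslope, sub_zero]
  have hdiff : ‖f z - f 0‖ ≤ ‖z‖ * (A + |B| + ‖f 0‖) := by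
    nlinarith [norm_sub_le (f z) (f 0), le_abs_self B, abs_nonneg B, norm_nonneg (f 0)]
  exact le_of_mul_le_mul_left (hnorm ▸ hdiff) (by linarith)

theorem Differentiable.exists_eq_add_smul_of_norm_le {F : Type*} [NormedAddCommGroup F]
    [NormedSpace ℂ F] [CompleteSpace F] {f : ℂ → F} (hf : Differentiable ℂ f) {A B R : ℝ}
    (h : ∀ z, R < ‖z‖ → ‖f z‖ ≤ A * ‖z‖ + B) : ∃ c : F, ∀ z, f z = f 0 + z • c := by
  have hg : Differentiable ℂ (dslope f 0) := fun z ↦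
    ((differentiableOn_dslope univ_mem).2 hf.differentiableOn z trivial).differentiableAt
      univ_mem
  have hbdd : IsBounded (range (dslope f 0)) :=
    isBounded_range_of_norm_le_of_lt_norm hg.continuous (R := max R 1) fun z hz ↦
      norm_dslope_zero_le_of_norm_le (le_max_right R 1 |>.trans hz.le)
        (h z (le_max_left R 1 |>.trans_lt hz))
  obtain ⟨c, hc⟩ := hg.exists_const_forall_eq_of_bounded hbdd
  refine ⟨c, fun z ↦ ?_⟩
  have hz := sub_smul_dslope f 0 z
  rw [sub_zero, hc] at hz
  rw [hz, add_sub_cancel]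

lemma exists_norm_eq_and_norm_mul_add_eq (a b : ℂ) {r : ℝ} (hr : 0 ≤ r) :
    ∃ z : ℂ, ‖z‖ = r ∧ ‖a * z + b‖ = ‖a‖ * r + ‖b‖ := by
  set u := exp (arg b * I)
  set v := exp (arg a * I)
  refine ⟨r * u / v, ?_, ?_⟩
  · simp [u, v, norm_exp_ofReal_mul_I, abs_of_nonneg hr]
  · have hv : v ≠ 0 := exp_ne_zero _
    have : a * (r * u / v) + b = ((‖a‖ * r + ‖b‖ : ℝ) : ℂ) * u := by
      calc a * (r * u / v) + b = ‖a‖ * v * (r * u / v) + ‖b‖ * u := by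
            rw [norm_mul_exp_arg_mul_I, norm_mul_exp_arg_mul_I]
        _ = _ := by push_cast; field_simp
    rw [this, norm_mul, norm_exp_ofReal_mul_I, mul_one, norm_real,
      Real.norm_of_nonneg (by positivity)]

lemma norm_le_one_and_eq_zero_of_norm_mul_add_le {a b : ℂ}
    (h : ∀ ε > 0, ∃ R > 0, ∀ z : ℂ, R < ‖z‖ → ‖a * z + b‖ ≤ ‖z‖ + ε) :
    ‖a‖ ≤ 1 ∧ (‖a‖ = 1 → b = 0) := by
  have hgrowth : ∀ ε > 0, ∃ R, ∀ r, R < r → ‖a‖ * r + ‖b‖ ≤ r + ε := by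
    intro ε hε
    obtain ⟨R, hR, hRε⟩ := h ε hε
    refine ⟨R, fun r hr ↦ ?_⟩
    obtain ⟨z, hz, hz'⟩ := exists_norm_eq_and_norm_mul_add_eq a b (hR.trans hr).le
    simpa [hz, hz'] using hRε z (hz ▸ hr)
  have ha : ‖a‖ ≤ 1 := by
    by_contra! ha
    obtain ⟨R, hR⟩ := hgrowth 1 one_pos
    have htend : Tendsto (fun r ↦ (‖a‖ - 1) * r) atTop atTop :=
      tendsto_id.const_mul_atTop (sub_pos.2 ha)
    obtain ⟨r, hr1, hrR⟩ := ((htend.eventually_gt_atTop 1).and (eventually_gt_atTop R)).exists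
    nlinarith [hR r hrR, norm_nonneg b]
  refine ⟨ha, fun ha1 ↦ norm_le_zero_iff.1 (le_of_forall_pos_le_add fun ε hε ↦ ?_)⟩
  obtain ⟨R, hR⟩ := hgrowth ε hε
  simpa [ha1] using hR (R + 1) (by linarith)

theorem statement19 (ψ : ℂ → ℂ) (hψ : Differentiable ℂ ψ)
    (h : ∀ ε > 0, ∃ R > 0, ∀ z : ℂ, R < ‖z‖ → ‖ψ z‖ ≤ ‖z‖ + ε) :
    ∃ a b : ℂ, ‖a‖ ≤ 1 ∧ (∀ z : ℂ, ψ z = a * z + b) ∧ (‖a‖ = 1 → b = 0) := by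
  obtain ⟨R, -, hR⟩ := h 1 one_pos
  obtain ⟨a, ha⟩ := hψ.exists_eq_add_smul_of_norm_le (A := 1) (by simpa using hR)
  have hψ_eq : ∀ z, ψ z = a * z + ψ 0 := fun z ↦ by rw [ha z, smul_eq_mul]; ring
  rw [funext hψ_eq] at h
  obtain ⟨ha1, hb⟩ := norm_le_one_and_eq_zero_of_norm_mul_add_le h
  exact ⟨a, ψ 0, ha1, hψ_eq, hb⟩
end
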